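/- arXiv:math/0504367 — 4 statements merged into one kernel-verified Lean document; each statement's English description precedes it below -/
import Mathlib

section
/- Statement C(2) is false: there exists a matroid M of rank n (namely n = 3) on 2n elements that is a disjoint union of 2 bases, together with pairwise disjoint independent sets I_1,...,I_n with |I_i| ≤ 2, such that no n×2 grid exists containing each element exactly once with the elements of I_i in row i and both columns bases of M. Specifically, the graphic matroid M(K_4) with I_1, I_2, I_3 the three pairs of non-incident (opposite) edges of K_4 is such a counterexample. -/
open Set Function Matroid SimpleGraph

/-- The edge set of the complete graph `K₄` on vertices `Fin 4`. -/
def K4edges : Set (Sym2 (Fin 4)) := {e | ¬ e.IsDiag}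

/-- An edge set is acyclic iff the simple graph it spans has no cycles. -/
def EdgeAcyclic (S : Set (Sym2 (Fin 4))) : Prop :=
  (SimpleGraph.fromEdgeSet S).IsAcyclic

/-- A spanning tree of `K₄`, viewed as a set of edges. -/
def K4SpanningTree (T : Set (Sym2 (Fin 4))) : Prop :=
  T ⊆ K4edges ∧ EdgeAcyclic T ∧ (SimpleGraph.fromEdgeSet T).Connected

/-- The three pairs of opposite (non-incident) edges of `K₄`. -/
def oppPairs : Fin 3 → Set (Sym2 (Fin 4)) :=
  ![{s(0, 1), s(2, 3)}, {s(0, 2), s(1, 3)}, {s(0, 3), s(1, 2)}]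

open Set Function Matroid

/-- Rota's basis conjecture for rank `n`. -/
def RotaConj (n : ℕ) : Prop :=
  ∀ (α : Type) (M : Matroid α) (B : Fin n → Set α),
    (∀ i, M.IsBase (B i)) → (∀ i, (B i).ncard = n) →
    Pairwise (Function.onFun Disjoint B) → (⋃ i, B i) = M.E →
    ∃ g : Fin n → Fin n → α,
      Function.Injective (fun p : Fin n × Fin n => g p.1 p.2) ∧
      (∀ x ∈ M.E, ∃ i j, g i j = x) ∧
      (∀ i, {x | ∃ j, g i j = x} = B i) ∧
      (∀ j, M.IsBase {x | ∃ i, g i j = x})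

/-- The statement `C(k)` from the paper. -/
def CStatement (k : ℕ) : Prop :=
  ∀ (α : Type) (n : ℕ) (M : Matroid α) (B : Fin k → Set α) (I : Fin n → Set α),
    (∀ j, M.IsBase (B j)) → (∀ j, (B j).ncard = n) →
    Pairwise (Function.onFun Disjoint B) → (⋃ j, B j) = M.E →
    (∀ i, M.Indep (I i)) → Pairwise (Function.onFun Disjoint I) →
    (∀ i, (I i).ncard ≤ k) →
    ∃ g : Fin n → Fin k → α,
      Function.Injective (fun p : Fin n × Fin k => g p.1 p.2) ∧
      (∀ x ∈ M.E, ∃ i j, g i j = x) ∧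
      (∀ i, I i ⊆ {x | ∃ j, g i j = x}) ∧
      (∀ j, M.IsBase {x | ∃ i, g i j = x})

/-!
`M(K₄)` is obtained as the image of a matroid on the six edge labels whose independent sets are
those containing none of the seven cycles of `K₄`; the matroid axioms are then a finite check,
and the link with graph acyclicity is that on four vertices every cycle is a triangle or a
4-cycle. In a grid as in `C(2)` for the three opposite pairs, each column picks one edge of every
opposite pair, and the two columns pick complementary edges. Every such choice is a star or a
triangle, and the complement of a star is a triangle, so some column is not independent.
-/

namespace SimpleGraph

variable {V : Type*} {G : SimpleGraph V}

theorem not_isAcyclic_of_triangle {a b c : V} (hab : G.Adj a b) (hbc : G.Adj b c)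
    (hca : G.Adj c a) : ¬ G.IsAcyclic := by
  classical
  intro h
  exact h.cliqueFree le_rfl {a, b, c} (is3Clique_triple_iff.2 ⟨hab, hca.symm, hbc⟩)

theorem not_isAcyclic_of_square {a b c d : V} (hac : a ≠ c) (hbd : b ≠ d) (hab : G.Adj a b)
    (hbc : G.Adj b c) (hcd : G.Adj c d) (hda : G.Adj d a) : ¬ G.IsAcyclic := by
  intro h
  refine h (.cons hab (.cons hbc (.cons hcd (.cons hda .nil)))) ?_
  simp [Walk.isCycle_def, Walk.isTrail_def, hab.ne, hbc.ne, hcd.ne, hda.ne, hac, hbd,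
    hab.ne.symm, hda.ne.symm, hac.symm]

theorem isAcyclic_of_card_le_four [Fintype V] (hV : Fintype.card V ≤ 4)
    (htri : ∀ a b c, G.Adj a b → G.Adj b c → ¬ G.Adj c a)
    (hsq : ∀ a b c d, a ≠ c → b ≠ d → G.Adj a b → G.Adj b c → G.Adj c d → ¬ G.Adj d a) :
    G.IsAcyclic := by
  intro v p hp
  have hlen : p.length ≤ 4 := by
    simpa using (hp.support_nodup.length_le_card).trans hV
  have h3 := hp.three_le_length
  match p, hlen, h3, hp.support_nodup with
  | .cons h₁ (.cons h₂ (.cons h₃ .nil)), _, _, _ => exact htri _ _ _ h₁ h₂ h₃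
  | .cons h₁ (.cons h₂ (.cons h₃ (.cons h₄ .nil))), _, _, hnd =>
    simp only [Walk.support_cons, Walk.support_nil, List.tail_cons, List.nodup_cons,
      List.mem_cons, not_or] at hnd
    obtain ⟨⟨-, hbd, -⟩, ⟨-, hcv, -⟩, -⟩ := hnd
    exact hsq _ _ _ _ (Ne.symm hcv) hbd h₁ h₂ h₃ h₄

end SimpleGraph

theorem Fin.exists_add_eq_of_range_subset {α : Type*} {f h : Fin 2 → α} (hh : Injective h)
    (hsub : range h ⊆ range f) : ∃ c, ∀ j, f j = h (c + j) := by
  obtain ⟨a, ha⟩ := hsub ⟨0, rfl⟩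
  obtain ⟨b, hb⟩ := hsub ⟨1, rfl⟩
  have hab : a ≠ b := by
    rintro rfl
    exact absurd (hh (ha.symm.trans hb)) (by decide)
  refine ⟨a, fun j => ?_⟩
  fin_cases a <;> fin_cases b <;> fin_cases j <;> simp_all

theorem not_cStatement_two {α : Type} {n : ℕ} {M : Matroid α} {B₁ B₂ : Set α}
    {I : Fin n → Set α} (hB₁ : M.IsBase B₁) (hB₂ : M.IsBase B₂) (hn : B₁.ncard = n)
    (hdisj : Disjoint B₁ B₂) (hunion : B₁ ∪ B₂ = M.E) (hI : ∀ i, M.Indep (I i))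
    (hIdisj : Pairwise (onFun Disjoint I)) (hIcard : ∀ i, (I i).ncard ≤ 2)
    (hgrid : ¬ ∃ g : Fin n → Fin 2 → α,
      Injective (fun p : Fin n × Fin 2 => g p.1 p.2) ∧
      (∀ x ∈ M.E, ∃ i j, g i j = x) ∧
      (∀ i, I i ⊆ {x | ∃ j, g i j = x}) ∧
      (∀ j, M.IsBase {x | ∃ i, g i j = x})) :
    ¬ CStatement 2 := by
  intro hC
  refine hgrid (hC α n M ![B₁, B₂] I (Fin.forall_fin_two.2 ⟨hB₁, hB₂⟩)
    (Fin.forall_fin_two.2 ⟨hn, hB₁.ncard_eq_ncard_of_isBase hB₂ ▸ hn⟩) ?_ ?_ hI hIdisj hIcard)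
  · intro i j hij
    fin_cases i <;> fin_cases j <;> simp_all [onFun, hdisj.symm]
  · simp [← hunion, Fin.exists_fin_two, Set.ext_iff]

def k4Edge : Fin 6 → Sym2 (Fin 4) := ![s(0, 1), s(0, 2), s(0, 3), s(1, 2), s(1, 3), s(2, 3)]

theorem k4Edge_injective : Injective k4Edge := by decide

theorem range_k4Edge : range k4Edge = K4edges := by
  ext e
  induction e using Sym2.ind with
  | h a b =>
    simp only [mem_range, K4edges, mem_ofPred_eq]
    revert a b
    decide

theorem exists_finset_image_k4Edge_eq {S : Set (Sym2 (Fin 4))} (hS : S ⊆ K4edges) :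
    ∃ t : Finset (Fin 6), k4Edge '' t = S := by
  obtain ⟨s, rfl⟩ := subset_range_iff_exists_image_eq.1 (range_k4Edge ▸ hS)
  obtain ⟨t, rfl⟩ := (toFinite s).exists_finset_coe
  exact ⟨t, rfl⟩

theorem ncard_image_k4Edge (t : Finset (Fin 6)) : (k4Edge '' t).ncard = t.card := by
  rw [ncard_image_of_injective _ k4Edge_injective, ncard_coe_finset]

-- The four triangles and the three 4-cycles of `K₄`, as sets of indices of `k4Edge`.
def k4Cycles : Finset (Finset (Fin 6)) :=
  {{0, 1, 3}, {0, 2, 4}, {1, 2, 5}, {3, 4, 5}, {0, 2, 3, 5}, {0, 1, 4, 5}, {1, 2, 3, 4}}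

theorem exists_k4Cycles_of_triangle : ∀ a b c : Fin 4, a ≠ b → b ≠ c → c ≠ a →
    ∃ C ∈ k4Cycles, C.image k4Edge ⊆ {s(a, b), s(b, c), s(c, a)} := by
  decide

theorem exists_k4Cycles_of_square : ∀ a b c d : Fin 4, a ≠ b → b ≠ c → c ≠ d → d ≠ a → a ≠ c →
    b ≠ d → ∃ C ∈ k4Cycles, C.image k4Edge ⊆ {s(a, b), s(b, c), s(c, d), s(d, a)} := by
  decide

theorem triangle_or_square_of_mem_k4Cycles : ∀ C ∈ k4Cycles,
    (∃ a b c : Fin 4, a ≠ b ∧ b ≠ c ∧ c ≠ a ∧ {s(a, b), s(b, c), s(c, a)} ⊆ C.image k4Edge) ∨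
    ∃ a b c d : Fin 4, a ≠ b ∧ b ≠ c ∧ c ≠ d ∧ d ≠ a ∧ a ≠ c ∧ b ≠ d ∧
      {s(a, b), s(b, c), s(c, d), s(d, a)} ⊆ C.image k4Edge := by
  decide

def IsK4Forest (t : Finset (Fin 6)) : Prop := ∀ C ∈ k4Cycles, ¬ C ⊆ t

instance : DecidablePred IsK4Forest := fun t =>
  inferInstanceAs (Decidable (∀ C ∈ k4Cycles, ¬ C ⊆ t))

theorem subset_of_image_k4Edge_subset {C t : Finset (Fin 6)} {E : Finset (Sym2 (Fin 4))}
    (hC : C.image k4Edge ⊆ E) (hE : ∀ e ∈ E, e ∈ k4Edge '' t) : C ⊆ t := fun _ hi =>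
  k4Edge_injective.mem_set_image.1 (hE _ (hC (Finset.mem_image_of_mem _ hi)))

theorem edgeAcyclic_image_k4Edge_iff (t : Finset (Fin 6)) :
    EdgeAcyclic (k4Edge '' t) ↔ IsK4Forest t := by
  have mem_of_adj {a b : Fin 4} (h : (fromEdgeSet (k4Edge '' t)).Adj a b) :
      s(a, b) ∈ k4Edge '' t := ((fromEdgeSet_adj _).1 h).1
  constructor
  · intro hacyc C hC hCt
    have adj {a b : Fin 4} (hab : a ≠ b) (h : s(a, b) ∈ C.image k4Edge) :
        (fromEdgeSet (k4Edge '' t)).Adj a b := by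
      refine (fromEdgeSet_adj _).2 ⟨?_, hab⟩
      rw [Finset.mem_image] at h
      obtain ⟨i, hi, hi'⟩ := h
      exact ⟨i, hCt hi, hi'⟩
    rcases triangle_or_square_of_mem_k4Cycles C hC with
      ⟨a, b, c, hab, hbc, hca, h⟩ | ⟨a, b, c, d, hab, hbc, hcd, hda, hac, hbd, h⟩
    · exact not_isAcyclic_of_triangle (adj hab (h (by simp))) (adj hbc (h (by simp)))
        (adj hca (h (by simp))) hacyc
    · exact not_isAcyclic_of_square hac hbd (adj hab (h (by simp))) (adj hbc (h (by simp)))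
        (adj hcd (h (by simp))) (adj hda (h (by simp))) hacyc
  · intro hforest
    refine isAcyclic_of_card_le_four (by simp) (fun a b c hab hbc hca => ?_)
      (fun a b c d hac hbd hab hbc hcd hda => ?_)
    · obtain ⟨C, hC, hCE⟩ := exists_k4Cycles_of_triangle a b c hab.ne hbc.ne hca.ne
      refine hforest C hC (subset_of_image_k4Edge_subset hCE ?_)
      simpa [or_imp, forall_and] using ⟨mem_of_adj hab, mem_of_adj hbc, mem_of_adj hca⟩
    · obtain ⟨C, hC, hCE⟩ := exists_k4Cycles_of_square a b c d hab.ne hbc.ne hcd.ne hda.ne hac hbd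
      refine hforest C hC (subset_of_image_k4Edge_subset hCE ?_)
      simpa [or_imp, forall_and] using
        ⟨mem_of_adj hab, mem_of_adj hbc, mem_of_adj hcd, mem_of_adj hda⟩

set_option maxRecDepth 10000 in
theorem IsK4Forest.exists_insert_of_card_lt : ∀ ⦃s t : Finset (Fin 6)⦄, IsK4Forest s →
    IsK4Forest t → s.card < t.card → ∃ e ∈ t, e ∉ s ∧ IsK4Forest (insert e s) := by
  decide

theorem IsK4Forest.mono {s t : Finset (Fin 6)} (ht : IsK4Forest t) (hst : s ⊆ t) :
    IsK4Forest s := fun C hC hCs => ht C hC (hCs.trans hst)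

set_option maxRecDepth 10000 in
theorem IsK4Forest.card_le_three : ∀ ⦃t : Finset (Fin 6)⦄, IsK4Forest t → t.card ≤ 3 := by
  decide

def k4ForestMatroid : Matroid (Fin 6) :=
  (IndepMatroid.ofFinset univ IsK4Forest (by decide)
    (fun _ _ hJ hIJ => hJ.mono hIJ) IsK4Forest.exists_insert_of_card_lt
    (by simp)).matroid

theorem k4ForestMatroid_indep_iff (t : Finset (Fin 6)) :
    k4ForestMatroid.Indep t ↔ IsK4Forest t := by
  rw [k4ForestMatroid, IndepMatroid.matroid_indep_iff, IndepMatroid.ofFinset_indep]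

def graphicK4 : Matroid (Sym2 (Fin 4)) := k4ForestMatroid.map k4Edge k4Edge_injective.injOn

theorem graphicK4_ground : graphicK4.E = K4edges := by
  rw [graphicK4, map_ground, ← range_k4Edge, ← image_univ]
  rfl

theorem graphicK4_indep_image_iff (t : Finset (Fin 6)) :
    graphicK4.Indep (k4Edge '' t) ↔ IsK4Forest t := by
  rw [graphicK4, map_image_indep_iff (subset_univ _), k4ForestMatroid_indep_iff]

theorem graphicK4_indep_iff (S : Set (Sym2 (Fin 4))) :
    graphicK4.Indep S ↔ S ⊆ K4edges ∧ EdgeAcyclic S := by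
  by_cases hS : S ⊆ K4edges
  · obtain ⟨t, rfl⟩ := exists_finset_image_k4Edge_eq hS
    rw [graphicK4_indep_image_iff, edgeAcyclic_image_k4Edge_iff, and_iff_right hS]
  · exact iff_of_false (fun h => hS (graphicK4_ground ▸ h.subset_ground)) (fun h => hS h.1)

theorem graphicK4_isBase_image {t : Finset (Fin 6)} (ht : IsK4Forest t) (hcard : t.card = 3) :
    graphicK4.IsBase (k4Edge '' t) := by
  refine ((graphicK4_indep_image_iff t).2 ht).isBase_of_maximal fun J hJ htJ => ?_
  obtain ⟨u, rfl⟩ := exists_finset_image_k4Edge_eq (graphicK4_ground ▸ hJ.subset_ground)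
  rw [image_subset_image_iff k4Edge_injective, Finset.coe_subset] at htJ
  have hu := IsK4Forest.card_le_three ((graphicK4_indep_image_iff u).1 hJ)
  rw [Finset.eq_of_subset_of_card_le htJ (by omega)]

theorem graphicK4_ncard_of_isBase {B : Set (Sym2 (Fin 4))} (hB : graphicK4.IsBase B) :
    B.ncard = 3 := by
  rw [hB.ncard_eq_ncard_of_isBase (graphicK4_isBase_image (t := {0, 1, 2}) (by decide) rfl),
    ncard_image_k4Edge]
  rfl

theorem graphicK4_exists_disjoint_isBase :
    ∃ B₁ B₂, graphicK4.IsBase B₁ ∧ graphicK4.IsBase B₂ ∧ Disjoint B₁ B₂ ∧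
      B₁ ∪ B₂ = graphicK4.E := by
  refine ⟨k4Edge '' ↑({0, 3, 5} : Finset (Fin 6)), k4Edge '' ↑({1, 2, 4} : Finset (Fin 6)),
    graphicK4_isBase_image (by decide) rfl, graphicK4_isBase_image (by decide) rfl, ?_, ?_⟩
  · rw [disjoint_image_iff k4Edge_injective, Finset.disjoint_coe]
    decide
  · rw [← image_union, ← Finset.coe_union, graphicK4_ground, ← range_k4Edge,
      show ({0, 3, 5} ∪ {1, 2, 4} : Finset (Fin 6)) = Finset.univ by decide, Finset.coe_univ,
      image_univ]

def oppPairIdx : Fin 3 → Fin 2 → Fin 6 := ![![0, 5], ![1, 4], ![2, 3]]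

theorem oppPairs_eq_image (i : Fin 3) :
    oppPairs i = k4Edge '' ↑(Finset.univ.image (oppPairIdx i)) := by
  fin_cases i <;> simp [oppPairs, oppPairIdx, k4Edge, image_insert_eq, pair_comm]

theorem graphicK4_indep_oppPairs (i : Fin 3) : graphicK4.Indep (oppPairs i) := by
  rw [oppPairs_eq_image, graphicK4_indep_image_iff]
  revert i
  decide

theorem pairwise_disjoint_oppPairs : Pairwise (onFun Disjoint oppPairs) := by
  intro i j hij
  rw [onFun, oppPairs_eq_image, oppPairs_eq_image, disjoint_image_iff k4Edge_injective,
    Finset.disjoint_coe]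
  revert i j
  decide

theorem ncard_oppPairs_le (i : Fin 3) : (oppPairs i).ncard ≤ 2 := by
  rw [oppPairs_eq_image, ncard_image_k4Edge]
  exact Finset.card_image_le.trans_eq (Finset.card_fin 2)

theorem oppPairIdx_injective : ∀ i, Injective (oppPairIdx i) := by
  decide

theorem exists_not_isK4Forest_transversal : ∀ c : Fin 3 → Fin 2,
    ∃ j : Fin 2, ¬ IsK4Forest (Finset.univ.image fun i => oppPairIdx i (c i + j)) := by
  decide

theorem graphicK4_not_exists_grid :
    ¬ ∃ g : Fin 3 → Fin 2 → Sym2 (Fin 4),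
      Injective (fun p : Fin 3 × Fin 2 => g p.1 p.2) ∧
      (∀ x ∈ graphicK4.E, ∃ i j, g i j = x) ∧
      (∀ i, oppPairs i ⊆ {x | ∃ j, g i j = x}) ∧
      (∀ j, graphicK4.IsBase {x | ∃ i, g i j = x}) := by
  rintro ⟨g, -, -, hrow, hcol⟩
  have row_eq (i : Fin 3) : ∃ c, ∀ j, g i j = k4Edge (oppPairIdx i (c + j)) := by
    refine Fin.exists_add_eq_of_range_subset (h := k4Edge ∘ oppPairIdx i)
      (k4Edge_injective.comp (oppPairIdx_injective i)) ?_
    have := hrow i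
    rwa [oppPairs_eq_image, Finset.coe_image, Finset.coe_univ, image_univ, ← range_comp] at this
  choose c hc using row_eq
  obtain ⟨j, hj⟩ := exists_not_isK4Forest_transversal c
  refine hj ((graphicK4_indep_image_iff _).1 ?_)
  convert (hcol j).indep
  ext x
  simp [hc]

/-- `C(2)` is false, with `M(K₄)` and the three opposite edge pairs as counterexample. -/
theorem C2_false_via_K4 :
    ¬ CStatement 2 ∧
    ∃ M : Matroid (Sym2 (Fin 4)),
      M.E = K4edges ∧
      (∀ S, M.Indep S ↔ S ⊆ K4edges ∧ EdgeAcyclic S) ∧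
      (∀ B, M.IsBase B → B.ncard = 3) ∧
      (∃ B₁ B₂, M.IsBase B₁ ∧ M.IsBase B₂ ∧ Disjoint B₁ B₂ ∧ B₁ ∪ B₂ = M.E) ∧
      (∀ i, M.Indep (oppPairs i)) ∧
      Pairwise (Function.onFun Disjoint oppPairs) ∧
      (∀ i, (oppPairs i).ncard ≤ 2) ∧
      ¬ ∃ g : Fin 3 → Fin 2 → Sym2 (Fin 4),
          Function.Injective (fun p : Fin 3 × Fin 2 => g p.1 p.2) ∧
          (∀ x ∈ M.E, ∃ i j, g i j = x) ∧
          (∀ i, oppPairs i ⊆ {x | ∃ j, g i j = x}) ∧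
          (∀ j, M.IsBase {x | ∃ i, g i j = x}) := by
  obtain ⟨B₁, B₂, hB₁, hB₂, hdisj, hunion⟩ := graphicK4_exists_disjoint_isBase
  refine ⟨not_cStatement_two hB₁ hB₂ (graphicK4_ncard_of_isBase hB₁) hdisj hunion
      graphicK4_indep_oppPairs pairwise_disjoint_oppPairs ncard_oppPairs_le
      graphicK4_not_exists_grid,
    graphicK4, graphicK4_ground, graphicK4_indep_iff, fun _ => graphicK4_ncard_of_isBase,
    ⟨B₁, B₂, hB₁, hB₂, hdisj, hunion⟩, graphicK4_indep_oppPairs, pairwise_disjoint_oppPairs,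
    ncard_oppPairs_le, graphicK4_not_exists_grid⟩
end

section
/- The vector matroid on the 8 vectors in ℝ⁴ given by v1 = (-2,3,0,1), v2 = (0,0,1,1), v3 = (0,2,0,1), v4 = (1,0,3,1), v5 = (1,0,0,1), v6 = (0,1,2,1), v7 = (0,1,0,1), v8 = (4,0,0,1), with I_1 = {v1,v2}, I_2 = {v3,v4}, I_3 = {v5,v6}, I_4 = {v7,v8}, is a counterexample to C(2): these 8 vectors can be partitioned into two bases of ℝ⁴, each I_i is linearly independent, but there is no partition of the 8 vectors into two bases B'_1, B'_2 such that each I_i has one element in B'_1 and one element in B'_2. -/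
/-! All eight vectors have last coordinate `1`, so they are the points `(p, 1)` for eight points
`p ∈ ℝ³`, and affine dependencies among the points are linear dependencies among the vectors.
Besides the two bases `{v1,…,v4}` and `{v5,…,v8}`, the configuration contains three collinear
triples through `v1` (`v1 v3 v8`, `v1 v5 v7`, `v1 v4 v6`) and two coplanar quadruples
(`v2 v4 v5 v8` in `y = 0`, `v2 v3 v6 v7` in `x = 0`). Every choice of one vector from each pair
`I_i` either contains one of the three triples or leaves one of the two quadruples to the
complementary choice, so the two halves of a splitting partition are never both bases.
Indices are 0-based: `not_jIndep_027` is about `v1 v3 v8`. -/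

open Set Function

/-- The eight vectors in `ℝ⁴` from Oxley's matroid `J`. -/
noncomputable def Jvec : Fin 8 → (Fin 4 → ℝ) :=
  ![![-2, 3, 0, 1], ![0, 0, 1, 1], ![0, 2, 0, 1], ![1, 0, 3, 1],
    ![1, 0, 0, 1], ![0, 1, 2, 1], ![0, 1, 0, 1], ![4, 0, 0, 1]]

/-- Linear independence of a subfamily of the eight vectors. -/
def JIndep (s : Set (Fin 8)) : Prop :=
  LinearIndependent ℝ (fun x : s => Jvec x)

/-- The four pairs `{v1,v2}, {v3,v4}, {v5,v6}, {v7,v8}` (by index). -/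
def Jpairs : Fin 4 → Set (Fin 8) :=
  ![{0, 1}, {2, 3}, {4, 5}, {6, 7}]

lemma xor_mem_of_ncard_pair_inter_eq_one {α : Type*} {a b : α} (hab : a ≠ b) {S : Set α}
    (h : ({a, b} ∩ S).ncard = 1) : Xor (a ∈ S) (b ∈ S) := by
  by_cases ha : a ∈ S <;> by_cases hb : b ∈ S <;>
    simp [ha, hb, insert_inter_of_mem, insert_inter_of_notMem, ncard_pair hab] at h ⊢

lemma JIndep.mono {s t : Set (Fin 8)} (h : JIndep s) (hts : t ⊆ s) : JIndep t :=
  LinearIndepOn.mono h hts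

lemma jIndep_0123 : JIndep ({0, 1, 2, 3} : Finset (Fin 8)) := by
  refine linearIndepOn_finset_iff.2 fun c hc => ?_
  simp [funext_iff, Fin.forall_fin_succ, Jvec] at hc
  obtain ⟨h0, h1, h2, h3⟩ := hc
  simp only [Finset.mem_insert, Finset.mem_singleton]
  rintro i (rfl | rfl | rfl | rfl) <;> linarith

lemma jIndep_4567 : JIndep ({4, 5, 6, 7} : Finset (Fin 8)) := by
  refine linearIndepOn_finset_iff.2 fun c hc => ?_
  simp [funext_iff, Fin.forall_fin_succ, Jvec] at hc
  obtain ⟨h0, h1, h2, h3⟩ := hc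
  simp only [Finset.mem_insert, Finset.mem_singleton]
  rintro i (rfl | rfl | rfl | rfl) <;> linarith

lemma not_jIndep_027 : ¬ JIndep ({0, 2, 7} : Finset (Fin 8)) :=
  not_linearIndepOn_finset_iff.2 ⟨![2, 0, -3, 0, 0, 0, 0, 1],
    by simp [funext_iff, Fin.forall_fin_succ, Jvec]; norm_num, 0, by simp, by simp⟩

lemma not_jIndep_046 : ¬ JIndep ({0, 4, 6} : Finset (Fin 8)) :=
  not_linearIndepOn_finset_iff.2 ⟨![1, 0, 0, 0, 2, 0, -3, 0],
    by simp [funext_iff, Fin.forall_fin_succ, Jvec]; norm_num, 0, by simp, by simp⟩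

lemma not_jIndep_035 : ¬ JIndep ({0, 3, 5} : Finset (Fin 8)) :=
  not_linearIndepOn_finset_iff.2 ⟨![1, 0, 0, 2, 0, -3, 0, 0],
    by simp [funext_iff, Fin.forall_fin_succ, Jvec]; norm_num, 0, by simp, by simp⟩

lemma not_jIndep_1347 : ¬ JIndep ({1, 3, 4, 7} : Finset (Fin 8)) :=
  not_linearIndepOn_finset_iff.2 ⟨![0, -3, 0, 1, 3, 0, 0, -1],
    by simp [funext_iff, Fin.forall_fin_succ, Jvec]; norm_num, 1, by simp, by simp⟩

lemma not_jIndep_1256 : ¬ JIndep ({1, 2, 5, 6} : Finset (Fin 8)) :=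
  not_linearIndepOn_finset_iff.2 ⟨![0, -2, -2, 0, 0, 1, 3, 0],
    by simp [funext_iff, Fin.forall_fin_succ, Jvec]; norm_num, 1, by simp, by simp⟩

lemma not_jIndep_and_jIndep_of_splits {S T : Set (Fin 8)} (hST : IsCompl S T)
    (hS : ∀ i, (Jpairs i ∩ S).ncard = 1) (hT : ∀ i, (Jpairs i ∩ T).ncard = 1) :
    ¬ (JIndep S ∧ JIndep T) := by
  wlog h0 : 0 ∈ S generalizing S T
  · exact fun h => this hST.symm hT hS (hST.compl_eq ▸ h0) h.symm
  obtain rfl := hST.compl_eq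
  have dep {C : Finset (Fin 8)} {U : Set (Fin 8)} (hC : ¬ JIndep C) (hCU : ↑C ⊆ U) :
      ¬ JIndep U := fun hU => hC (hU.mono hCU)
  have h1 : 1 ∉ S :=
    (xor_iff_iff_not.1 (xor_mem_of_ncard_pair_inter_eq_one (by decide) (hS 0))).1 h0
  rcases xor_mem_of_ncard_pair_inter_eq_one (by decide) (hS 1) with ⟨h2, h3⟩ | ⟨h3, h2⟩ <;>
  rcases xor_mem_of_ncard_pair_inter_eq_one (by decide) (hS 2) with ⟨h4, h5⟩ | ⟨h5, h4⟩ <;>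
  rcases xor_mem_of_ncard_pair_inter_eq_one (by decide) (hS 3) with ⟨h6, h7⟩ | ⟨h7, h6⟩
  · exact fun h => dep not_jIndep_046 (by simp [insert_subset_iff, *]) h.1
  · exact fun h => dep not_jIndep_027 (by simp [insert_subset_iff, *]) h.1
  · exact fun h => dep not_jIndep_1347 (by simp [insert_subset_iff, *]) h.2
  · exact fun h => dep not_jIndep_027 (by simp [insert_subset_iff, *]) h.1
  · exact fun h => dep not_jIndep_046 (by simp [insert_subset_iff, *]) h.1
  · exact fun h => dep not_jIndep_1256 (by simp [insert_subset_iff, *]) h.2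
  · exact fun h => dep not_jIndep_035 (by simp [insert_subset_iff, *]) h.1
  · exact fun h => dep not_jIndep_035 (by simp [insert_subset_iff, *]) h.1

/-- Oxley's `J`, represented by the eight vectors, is a counterexample to `C(2)`:
the vectors split into two bases, each pair `I_i` is independent, but no
partition into two bases splits every pair. -/
theorem J_counterexample_to_C2 :
    (∃ B₁ B₂ : Set (Fin 8), B₁ ∪ B₂ = univ ∧ Disjoint B₁ B₂ ∧
      B₁.ncard = 4 ∧ B₂.ncard = 4 ∧ JIndep B₁ ∧ JIndep B₂) ∧
    (∀ i, JIndep (Jpairs i)) ∧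
    ¬ ∃ B₁ B₂ : Set (Fin 8), B₁ ∪ B₂ = univ ∧ Disjoint B₁ B₂ ∧
        B₁.ncard = 4 ∧ B₂.ncard = 4 ∧ JIndep B₁ ∧ JIndep B₂ ∧
        ∀ i, (Jpairs i ∩ B₁).ncard = 1 ∧ (Jpairs i ∩ B₂).ncard = 1 := by
  refine ⟨⟨_, _, ?_, Finset.disjoint_coe.2 (by decide), by rw [ncard_coe_finset]; rfl,
    by rw [ncard_coe_finset]; rfl, jIndep_0123, jIndep_4567⟩, fun i => ?_, ?_⟩
  · ext x; fin_cases x <;> simp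
  · fin_cases i
    exacts [jIndep_0123.mono (by simp [Jpairs, insert_subset_iff]),
      jIndep_0123.mono (by simp [Jpairs, insert_subset_iff]),
      jIndep_4567.mono (by simp [Jpairs, insert_subset_iff]),
      jIndep_4567.mono (by simp [Jpairs, insert_subset_iff])]
  · rintro ⟨B₁, B₂, hU, hD, -, -, hI₁, hI₂, hsplit⟩
    exact not_jIndep_and_jIndep_of_splits ⟨hD, codisjoint_iff.2 hU⟩
      (fun i => (hsplit i).1) (fun i => (hsplit i).2) ⟨hI₁, hI₂⟩
end

section
/- There is no partition of the 8 vectors v1 = (-2,3,0,1), v2 = (0,0,1,1), v3 = (0,2,0,1), v4 = (1,0,3,1), v5 = (1,0,0,1), v6 = (0,1,2,1), v7 = (0,1,0,1), v8 = (4,0,0,1) in ℝ⁴ into two linearly independent sets B_1, B_2 of size 4 such that each of the pairs {v1,v2}, {v3,v4}, {v5,v6}, {v7,v8} has exactly one element in B_1 and one in B_2. -/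
open Set Function

lemma Jvec0 : Jvec 0 = ![-2,3,0,1] := rfl
lemma Jvec1 : Jvec 1 = ![0,0,1,1] := rfl
lemma Jvec2 : Jvec 2 = ![0,2,0,1] := rfl
lemma Jvec3 : Jvec 3 = ![1,0,3,1] := rfl
lemma Jvec4 : Jvec 4 = ![1,0,0,1] := rfl
lemma Jvec5 : Jvec 5 = ![0,1,2,1] := rfl
lemma Jvec6 : Jvec 6 = ![0,1,0,1] := rfl
lemma Jvec7 : Jvec 7 = ![4,0,0,1] := rfl

lemma pair_split {x y : Fin 8} (hxy : x ≠ y) {B : Set (Fin 8)}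
    (h : (({x, y} : Set (Fin 8)) ∩ B).ncard = 1) :
    (x ∈ B ∧ y ∉ B) ∨ (x ∉ B ∧ y ∈ B) := by
  by_cases hx : x ∈ B <;> by_cases hy : y ∈ B
  · exfalso
    have he : ({x, y} : Set (Fin 8)) ∩ B = {x, y} := by
      apply Set.inter_eq_left.mpr
      intro z hz
      rcases hz with rfl | rfl
      · exact hx
      · exact hy
    rw [he, Set.ncard_pair hxy] at h
    norm_num at h
  · exact Or.inl ⟨hx, hy⟩
  · exact Or.inr ⟨hx, hy⟩
  · exfalso
    have he : ({x, y} : Set (Fin 8)) ∩ B = ∅ := by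
      ext z
      simp only [Set.mem_inter_iff, Set.mem_insert_iff, Set.mem_singleton_iff,
        Set.mem_empty_iff_false, iff_false, not_and]
      rintro (rfl | rfl) <;> assumption
    rw [he, Set.ncard_empty] at h
    norm_num at h

lemma dep4 {a b c d : Fin 8} {s : Set (Fin 8)}
    (ha : a ∈ s) (hb : b ∈ s) (hc : c ∈ s) (hd : d ∈ s)
    (hab : a ≠ b) (hac : a ≠ c) (had : a ≠ d)
    (hbc : b ≠ c) (hbd : b ≠ d) (hcd : c ≠ d)
    (g0 g1 g2 g3 : ℝ) (hg : g0 ≠ 0)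
    (hrel : g0 • Jvec a + g1 • Jvec b + g2 • Jvec c + g3 • Jvec d = 0) :
    ¬ JIndep s := by
  intro li
  set f : Fin 4 → s := ![⟨a, ha⟩, ⟨b, hb⟩, ⟨c, hc⟩, ⟨d, hd⟩] with hf
  have finj : Function.Injective f := by
    intro i j hij
    fin_cases i <;> fin_cases j <;>
      simp_all [hf, Subtype.ext_iff] <;> first | rfl | (exfalso; tauto)
  have li2 := li.comp f finj
  rw [Fintype.linearIndependent_iff] at li2
  have h0 := li2 ![g0, g1, g2, g3] ?_ 0
  · exact hg (by simpa using h0)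
  · rw [Fin.sum_univ_four]
    simpa [hf] using hrel

lemma dep_0246 {s : Set (Fin 8)} (h0 : (0 : Fin 8) ∈ s) (h2 : (2 : Fin 8) ∈ s)
    (h4 : (4 : Fin 8) ∈ s) (h6 : (6 : Fin 8) ∈ s) : ¬ JIndep s := by
  refine dep4 h0 h2 h4 h6 (by decide) (by decide) (by decide) (by decide) (by decide)
    (by decide) (-1) 0 (-2) 3 (by norm_num) ?_
  funext i; fin_cases i <;> norm_num [Jvec0, Jvec1, Jvec2, Jvec3, Jvec4, Jvec5, Jvec6, Jvec7]

lemma dep_0247 {s : Set (Fin 8)} (h0 : (0 : Fin 8) ∈ s) (h2 : (2 : Fin 8) ∈ s)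
    (h4 : (4 : Fin 8) ∈ s) (h7 : (7 : Fin 8) ∈ s) : ¬ JIndep s := by
  refine dep4 h0 h2 h4 h7 (by decide) (by decide) (by decide) (by decide) (by decide)
    (by decide) 2 (-3) 0 1 (by norm_num) ?_
  funext i; fin_cases i <;> norm_num [Jvec0, Jvec1, Jvec2, Jvec3, Jvec4, Jvec5, Jvec6, Jvec7]

lemma dep_1347 {s : Set (Fin 8)} (h1 : (1 : Fin 8) ∈ s) (h3 : (3 : Fin 8) ∈ s)
    (h4 : (4 : Fin 8) ∈ s) (h7 : (7 : Fin 8) ∈ s) : ¬ JIndep s := by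
  refine dep4 h1 h3 h4 h7 (by decide) (by decide) (by decide) (by decide) (by decide)
    (by decide) 3 (-1) (-3) 1 (by norm_num) ?_
  funext i; fin_cases i <;> norm_num [Jvec0, Jvec1, Jvec2, Jvec3, Jvec4, Jvec5, Jvec6, Jvec7]

lemma dep_0257 {s : Set (Fin 8)} (h0 : (0 : Fin 8) ∈ s) (h2 : (2 : Fin 8) ∈ s)
    (h5 : (5 : Fin 8) ∈ s) (h7 : (7 : Fin 8) ∈ s) : ¬ JIndep s := by
  refine dep4 h0 h2 h5 h7 (by decide) (by decide) (by decide) (by decide) (by decide)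
    (by decide) 2 (-3) 0 1 (by norm_num) ?_
  funext i; fin_cases i <;> norm_num [Jvec0, Jvec1, Jvec2, Jvec3, Jvec4, Jvec5, Jvec6, Jvec7]

lemma dep_0346 {s : Set (Fin 8)} (h0 : (0 : Fin 8) ∈ s) (h3 : (3 : Fin 8) ∈ s)
    (h4 : (4 : Fin 8) ∈ s) (h6 : (6 : Fin 8) ∈ s) : ¬ JIndep s := by
  refine dep4 h0 h3 h4 h6 (by decide) (by decide) (by decide) (by decide) (by decide)
    (by decide) (-1) 0 (-2) 3 (by norm_num) ?_
  funext i; fin_cases i <;> norm_num [Jvec0, Jvec1, Jvec2, Jvec3, Jvec4, Jvec5, Jvec6, Jvec7]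

lemma dep_1256 {s : Set (Fin 8)} (h1 : (1 : Fin 8) ∈ s) (h2 : (2 : Fin 8) ∈ s)
    (h5 : (5 : Fin 8) ∈ s) (h6 : (6 : Fin 8) ∈ s) : ¬ JIndep s := by
  refine dep4 h1 h2 h5 h6 (by decide) (by decide) (by decide) (by decide) (by decide)
    (by decide) (-2) (-2) 1 3 (by norm_num) ?_
  funext i; fin_cases i <;> norm_num [Jvec0, Jvec1, Jvec2, Jvec3, Jvec4, Jvec5, Jvec6, Jvec7]

lemma dep_0356 {s : Set (Fin 8)} (h0 : (0 : Fin 8) ∈ s) (h3 : (3 : Fin 8) ∈ s)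
    (h5 : (5 : Fin 8) ∈ s) (h6 : (6 : Fin 8) ∈ s) : ¬ JIndep s := by
  refine dep4 h0 h3 h5 h6 (by decide) (by decide) (by decide) (by decide) (by decide)
    (by decide) (-1) (-2) 3 0 (by norm_num) ?_
  funext i; fin_cases i <;> norm_num [Jvec0, Jvec1, Jvec2, Jvec3, Jvec4, Jvec5, Jvec6, Jvec7]

lemma dep_0357 {s : Set (Fin 8)} (h0 : (0 : Fin 8) ∈ s) (h3 : (3 : Fin 8) ∈ s)
    (h5 : (5 : Fin 8) ∈ s) (h7 : (7 : Fin 8) ∈ s) : ¬ JIndep s := by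
  refine dep4 h0 h3 h5 h7 (by decide) (by decide) (by decide) (by decide) (by decide)
    (by decide) (-1) (-2) 3 0 (by norm_num) ?_
  funext i; fin_cases i <;> norm_num [Jvec0, Jvec1, Jvec2, Jvec3, Jvec4, Jvec5, Jvec6, Jvec7]

/-- No partition of the eight vectors into two bases of `ℝ⁴` splits each of the
four designated pairs. -/
theorem J_no_split_partition :
    ¬ ∃ B₁ B₂ : Set (Fin 8), B₁ ∪ B₂ = univ ∧ Disjoint B₁ B₂ ∧
        B₁.ncard = 4 ∧ B₂.ncard = 4 ∧ JIndep B₁ ∧ JIndep B₂ ∧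
        ∀ i, (Jpairs i ∩ B₁).ncard = 1 ∧ (Jpairs i ∩ B₂).ncard = 1 := by
  rintro ⟨B₁, B₂, hu, hdisj, -, -, hI1, hI2, hp⟩
  have mem2 : ∀ x : Fin 8, x ∉ B₁ → x ∈ B₂ := by
    intro x hx
    have : x ∈ B₁ ∪ B₂ := hu ▸ Set.mem_univ x
    exact this.resolve_left hx
  have hp0 := (hp 0).1
  have hp1 := (hp 1).1
  have hp2 := (hp 2).1
  have hp3 := (hp 3).1
  simp only [Jpairs, Matrix.cons_val_zero, Matrix.cons_val_one, Matrix.head_cons,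
    Matrix.cons_val_two, Matrix.tail_cons, Matrix.cons_val_three] at hp0 hp1 hp2 hp3
  have c0 := pair_split (by decide) hp0
  have c1 := pair_split (by decide) hp1
  have c2 := pair_split (by decide) hp2
  have c3 := pair_split (by decide) hp3
  rcases c0 with ⟨m0, m1⟩ | ⟨m0, m1⟩ <;>
    rcases c1 with ⟨m2, m3⟩ | ⟨m2, m3⟩ <;>
      rcases c2 with ⟨m4, m5⟩ | ⟨m4, m5⟩ <;>
        rcases c3 with ⟨m6, m7⟩ | ⟨m6, m7⟩
  -- bits (0,0,0,0): B₁ ⊇ {0,2,4,6}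
  · exact dep_0246 m0 m2 m4 m6 hI1
  -- (0,0,0,1): B₁ ⊇ {0,2,4,7}
  · exact dep_0247 m0 m2 m4 m7 hI1
  -- (0,0,1,0): B₂ ⊇ {1,3,4,7}
  · exact dep_1347 (mem2 1 m1) (mem2 3 m3) (mem2 4 m4) (mem2 7 m7) hI2
  -- (0,0,1,1): B₁ ⊇ {0,2,5,7}
  · exact dep_0257 m0 m2 m5 m7 hI1
  -- (0,1,0,0): B₁ ⊇ {0,3,4,6}
  · exact dep_0346 m0 m3 m4 m6 hI1
  -- (0,1,0,1): B₂ ⊇ {1,2,5,6}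
  · exact dep_1256 (mem2 1 m1) (mem2 2 m2) (mem2 5 m5) (mem2 6 m6) hI2
  -- (0,1,1,0): B₁ ⊇ {0,3,5,6}
  · exact dep_0356 m0 m3 m5 m6 hI1
  -- (0,1,1,1): B₁ ⊇ {0,3,5,7}
  · exact dep_0357 m0 m3 m5 m7 hI1
  -- (1,0,0,0): B₂ ⊇ {0,3,5,7}
  · exact dep_0357 (mem2 0 m0) (mem2 3 m3) (mem2 5 m5) (mem2 7 m7) hI2
  -- (1,0,0,1): B₂ ⊇ {0,3,5,6}
  · exact dep_0356 (mem2 0 m0) (mem2 3 m3) (mem2 5 m5) (mem2 6 m6) hI2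
  -- (1,0,1,0): B₁ ⊇ {1,2,5,6}
  · exact dep_1256 m1 m2 m5 m6 hI1
  -- (1,0,1,1): B₂ ⊇ {0,3,4,6}
  · exact dep_0346 (mem2 0 m0) (mem2 3 m3) (mem2 4 m4) (mem2 6 m6) hI2
  -- (1,1,0,0): B₂ ⊇ {0,2,5,7}
  · exact dep_0257 (mem2 0 m0) (mem2 2 m2) (mem2 5 m5) (mem2 7 m7) hI2
  -- (1,1,0,1): B₁ ⊇ {1,3,4,7}
  · exact dep_1347 m1 m3 m4 m7 hI1
  -- (1,1,1,0): B₂ ⊇ {0,2,4,7}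
  · exact dep_0247 (mem2 0 m0) (mem2 2 m2) (mem2 4 m4) (mem2 7 m7) hI2
  -- (1,1,1,1): B₂ ⊇ {0,2,4,6}
  · exact dep_0246 (mem2 0 m0) (mem2 2 m2) (mem2 4 m4) (mem2 6 m6) hI2
end

section
/- Descent step in the proof of Theorem 1: Let M be a matroid of rank n ≥ 3 on n² elements partitioned into n disjoint bases B_1,...,B_n. Assume C(3) holds. Define a double partition of M to be a pair (β,τ) where β = (β_1,...,β_n) is a partition of the ground set into n pairwise disjoint bases and τ = (τ_1,...,τ_n) is a partition into n pairwise disjoint transversals (sets meeting each B_i in exactly one element), and define μ(β,τ) = Σ_{i≠j} |β_i ∩ τ_j|. Then for every double partition (β,τ) with μ(β,τ) > 0, there exists a double partition (β',τ') with μ(β',τ') < μ(β,τ). -/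
open Set Function Matroid

/-- A partition of the ground set of `M` into `n` pairwise disjoint bases. -/
def IsBasePartition {α : Type} {n : ℕ} (M : Matroid α) (β : Fin n → Set α) : Prop :=
  (∀ i, M.IsBase (β i)) ∧ Pairwise (Function.onFun Disjoint β) ∧ (⋃ i, β i) = M.E

/-- A partition of `E` into `n` pairwise disjoint transversals of the bases `B`
(each meeting each `B i` in exactly one element). -/
def IsTransversalPartition {α : Type} {n : ℕ} (B τ : Fin n → Set α) (E : Set α) : Prop :=
  (∀ j i, (τ j ∩ B i).ncard = 1) ∧ Pairwise (Function.onFun Disjoint τ) ∧ (⋃ j, τ j) = E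

/-- `μ(β,τ) = Σ_{i ≠ j} |β_i ∩ τ_j|`. -/
noncomputable def mu {α : Type} {n : ℕ} (β τ : Fin n → Set α) : ℕ :=
  ∑ i, ∑ j, if i = j then 0 else (β i ∩ τ j).ncard

open Set Function Matroid

/-!
Write `D(β, τ) = ∑ a, |β a ∩ τ a|`, so that `μ(β, τ) + D(β, τ) = |E| = n²`, and let
`Φ(β) = meetCount B β` be the number of pairs `(a, c)` such that `β a` meets `B c`. Since `τ a`
meets every `B c` exactly once, `D(β, τ) ≤ Φ(β)`; conversely, matching the parts of `β` to the
elements of each `B c` yields a transversal partition `τ'` with `Φ(β) ≤ D(β, τ')`. It therefore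
suffices to find a base partition `β'` with `D(β, τ) < Φ(β')`. If `Φ(β) = n²`, then `β' = β` works
because `μ(β, τ) > 0`. Otherwise some `β a` misses some `B c`; as `|B c| = n`, another part `β b`
meets `B c` twice. Apply `C(3)` to the restriction of `M` to the union `U` of `β a`, `β b` and a
third part, with the rows containing `min(|U ∩ B c|, 3)` elements of each `B c`: the three columns
are new bases replacing the three parts, and they meet each `B c` at least as often as the old
ones, strictly more often for this `c`.
-/

section Counting

variable {α ι κ : Type*}

lemma ncard_iUnion_of_fintype [Fintype ι] {s : ι → Set α} (hs : ∀ i, (s i).Finite)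
    (h : Pairwise (Disjoint on s)) : (⋃ i, s i).ncard = ∑ i, (s i).ncard := by
  rw [ncard_iUnion_of_finite hs h, finsum_eq_sum_of_fintype]

lemma ncard_iUnion_inter_eq_sum [Fintype ι] {s : ι → Set α} (h : Pairwise (Disjoint on s))
    {S : Set α} (hS : S.Finite) : ((⋃ i, s i) ∩ S).ncard = ∑ i, (s i ∩ S).ncard := by
  rw [iUnion_inter]
  exact ncard_iUnion_of_fintype (fun i => hS.subset inter_subset_right)
    fun i j hij => (h hij).mono inter_subset_left inter_subset_left

lemma ncard_eq_sum_sum_ncard_inter [Fintype ι] [Fintype κ] {E : Set α} (hE : E.Finite)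
    {β : ι → Set α} (hβ : Pairwise (Disjoint on β)) (hβE : ⋃ i, β i = E)
    {τ : κ → Set α} (hτ : Pairwise (Disjoint on τ)) (hτE : ⋃ j, τ j = E) :
    E.ncard = ∑ i, ∑ j, (β i ∩ τ j).ncard := by
  have hβE' : ∀ i, β i ⊆ E := fun i => hβE ▸ subset_iUnion β i
  rw [← inter_self E]
  nth_rw 1 [← hβE]
  rw [ncard_iUnion_inter_eq_sum hβ hE]
  refine Finset.sum_congr rfl fun i _ => ?_
  rw [inter_comm, ← hτE, ncard_iUnion_inter_eq_sum hτ (hE.subset (hβE' i))]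
  simp_rw [inter_comm]

lemma ncard_setOf_inter_nonempty_le [Fintype ι] {s : ι → Set α} (h : Pairwise (Disjoint on s))
    {S : Set α} (hS : S.Finite) :
    {i | (s i ∩ S).Nonempty}.ncard ≤ ((⋃ i, s i) ∩ S).ncard := by
  classical
  rw [ncard_iUnion_inter_eq_sum h hS, ncard_eq_toFinset_card', toFinset_ofPred, Finset.card_filter]
  refine Finset.sum_le_sum fun i _ => ?_
  split_ifs with hi
  · exact (ncard_pos (hS.subset inter_subset_right)).2 hi
  · exact Nat.zero_le _

lemma ncard_setOf_inter_nonempty_lt [Fintype ι] {s : ι → Set α} (h : Pairwise (Disjoint on s))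
    {S : Set α} (hS : S.Finite) {i₁ : ι} (hi₁ : 2 ≤ (s i₁ ∩ S).ncard) :
    {i | (s i ∩ S).Nonempty}.ncard < ((⋃ i, s i) ∩ S).ncard := by
  classical
  rw [ncard_iUnion_inter_eq_sum h hS, ncard_eq_toFinset_card', toFinset_ofPred, Finset.card_filter]
  refine Finset.sum_lt_sum (fun i _ => ?_) ⟨i₁, Finset.mem_univ _, by split_ifs <;> omega⟩
  split_ifs with hi
  · exact (ncard_pos (hS.subset inter_subset_right)).2 hi
  · exact Nat.zero_le _

lemma exists_one_lt_ncard_inter [Fintype ι] {s : ι → Set α} (h : Pairwise (Disjoint on s))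
    {S : Set α} (hS : S.Finite) (hSs : S ⊆ ⋃ i, s i) (hcard : Fintype.card ι ≤ S.ncard)
    {i₀ : ι} (hi₀ : s i₀ ∩ S = ∅) : ∃ i, 1 < (s i ∩ S).ncard := by
  classical
  have hsum : S.ncard = ∑ i ∈ Finset.univ.erase i₀, (s i ∩ S).ncard := by
    rw [Finset.sum_erase _ (f := fun i => (s i ∩ S).ncard) (by simp [hi₀]),
      ← ncard_iUnion_inter_eq_sum h hS, inter_eq_right.2 hSs]
  by_contra! hle
  have := Finset.sum_le_card_nsmul (Finset.univ.erase i₀) (fun i => (s i ∩ S).ncard) 1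
    fun i _ => hle i
  rw [Finset.card_erase_of_mem (Finset.mem_univ _), Finset.card_univ, smul_eq_mul] at this
  have : 0 < Fintype.card ι := Fintype.card_pos_iff.2 ⟨i₀⟩
  omega

lemma exists_bijOn_mem_of_pairwise_disjoint [Fintype ι] {S : Set α}
    (hS : S.Finite) (hcard : Fintype.card ι = S.ncard) {γ : ι → Set α}
    (hγ : Pairwise (Disjoint on γ)) :
    ∃ f : ι → α, BijOn f univ S ∧ ∀ i, (γ i ∩ S).Nonempty → f i ∈ γ i := by
  classical
  have hSne : ι → S.Nonempty := fun i =>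
    nonempty_of_ncard_ne_zero (hcard ▸ (Fintype.card_pos_iff.2 ⟨i⟩).ne')
  set p : ι → α := fun i => if h : (γ i ∩ S).Nonempty then h.some else (hSne i).some
  have hp : ∀ i, (γ i ∩ S).Nonempty → p i ∈ γ i ∩ S := fun i h => by
    simpa only [p, dif_pos h] using h.some_mem
  obtain ⟨g, hg⟩ := MapsTo.exists_equiv_extend_of_card_eq (t := hS.toFinset)
    (s := {i | (γ i ∩ S).Nonempty}) (f := p) (by rw [hcard, ncard_eq_toFinset_card S hS])
    (fun i hi => by simpa using (hp i hi).2)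
    (fun i hi j hj hij => by
      by_contra hne
      exact disjoint_left.1 (hγ hne) (hp i hi).1 (hij ▸ (hp j hj).1))
  refine ⟨fun i => g i, ⟨fun i _ => hS.mem_toFinset.1 (g i).2, ?_, fun x hx => ?_⟩,
    fun i hi => by simpa only [hg i hi] using (hp i hi).1⟩
  · exact fun i _ j _ hij => g.injective (Subtype.ext hij)
  · exact ⟨g.symm ⟨x, by simpa using hx⟩, mem_univ _, by simp⟩

end Counting

lemma mu_add_sum_ncard_inter_self {α : Type} {n : ℕ} (β τ : Fin n → Set α) :
    mu β τ + ∑ i, (β i ∩ τ i).ncard = ∑ i, ∑ j, (β i ∩ τ j).ncard := by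
  rw [mu, ← Finset.sum_add_distrib]
  refine Finset.sum_congr rfl fun i _ => ?_
  have hsplit : ∀ j, (β i ∩ τ j).ncard =
      (if i = j then 0 else (β i ∩ τ j).ncard) + if i = j then (β i ∩ τ j).ncard else 0 :=
    fun j => by split_ifs <;> simp
  rw [Finset.sum_congr rfl fun j _ => hsplit j, Finset.sum_add_distrib, Finset.sum_ite_eq]
  simp

lemma mu_add_sum_ncard_inter_self_eq_ncard {α : Type} {n : ℕ} {E : Set α} (hE : E.Finite)
    {β τ : Fin n → Set α} (hβ : Pairwise (Disjoint on β)) (hβE : ⋃ i, β i = E)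
    (hτ : Pairwise (Disjoint on τ)) (hτE : ⋃ j, τ j = E) :
    mu β τ + ∑ i, (β i ∩ τ i).ncard = E.ncard := by
  rw [mu_add_sum_ncard_inter_self, ncard_eq_sum_sum_ncard_inter hE hβ hβE hτ hτE]

section MeetCount

variable {α ι ι' κ : Type*}

noncomputable def meetCount [Fintype ι] (B : κ → Set α) (γ : ι → Set α) : ℕ :=
  ∑ a, {c | (γ a ∩ B c).Nonempty}.ncard

lemma meetCount_eq_sum_ncard [Fintype ι] [Fintype κ] (B : κ → Set α) (γ : ι → Set α) :
    meetCount B γ = ∑ c, {a | (γ a ∩ B c).Nonempty}.ncard := by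
  classical
  simp only [meetCount, ncard_eq_toFinset_card', toFinset_ofPred, Finset.card_filter]
  exact Finset.sum_comm

lemma exists_inter_eq_empty_of_meetCount_lt [Fintype ι] [Fintype κ] {B : κ → Set α}
    {γ : ι → Set α} (h : meetCount B γ < Fintype.card ι * Fintype.card κ) :
    ∃ a c, γ a ∩ B c = ∅ := by
  by_contra! hne
  have hfull : ∀ a, {c | (γ a ∩ B c).Nonempty} = univ := fun a => eq_univ_of_forall (hne a)
  simp [meetCount, hfull] at h

lemma ncard_inter_le_ncard_setOf_inter_nonempty [Finite κ] {B : κ → Set α} {S T : Set α}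
    (hT : ∀ c, (T ∩ B c).ncard = 1) (hS : S ⊆ ⋃ c, B c) :
    (S ∩ T).ncard ≤ {c | (S ∩ B c).Nonempty}.ncard := by
  choose t ht using fun c => ncard_eq_one.1 (hT c)
  refine (ncard_le_ncard (t := t '' {c | (S ∩ B c).Nonempty}) ?_ (toFinite _)).trans
    (ncard_image_le (toFinite _))
  rintro x ⟨hxS, hxT⟩
  obtain ⟨c, hc⟩ := mem_iUnion.1 (hS hxS)
  have hx : x = t c := by simpa [ht c] using (show x ∈ T ∩ B c from ⟨hxT, hc⟩)
  exact ⟨c, ⟨x, hxS, hc⟩, hx.symm⟩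

lemma sum_ncard_inter_le_meetCount [Fintype ι] [Finite κ] {B : κ → Set α} {γ τ : ι → Set α}
    (hτ : ∀ a c, (τ a ∩ B c).ncard = 1) (hγ : ∀ a, γ a ⊆ ⋃ c, B c) :
    ∑ a, (γ a ∩ τ a).ncard ≤ meetCount B γ :=
  Finset.sum_le_sum fun a _ => ncard_inter_le_ncard_setOf_inter_nonempty (hτ a) (hγ a)

lemma sum_extend_add_sum_comp {M : Type*} [AddCommMonoid M] [Fintype ι] [Fintype ι']
    {e : ι' → ι} (he : Injective e) (g : ι' → M) (f : ι → M) :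
    ∑ i, extend e g f i + ∑ k, f (e k) = ∑ i, f i + ∑ k, g k := by
  classical
  set s := Finset.univ.map ⟨e, he⟩
  have hcompl : ∀ i ∈ sᶜ, extend e g f i = f i := fun i hi =>
    extend_apply' _ _ _ fun ⟨k, hk⟩ => Finset.mem_compl.1 hi (by simp [s, ← hk])
  rw [← Finset.sum_add_sum_compl s, ← Finset.sum_add_sum_compl s f, Finset.sum_congr rfl hcompl]
  simp only [s, Finset.sum_map, Embedding.coeFn_mk, he.extend_apply]
  abel

lemma meetCount_extend_add [Fintype ι] [Fintype ι'] (B : κ → Set α) {e : ι' → ι}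
    (he : Injective e) (C : ι' → Set α) (γ : ι → Set α) :
    meetCount B (extend e C γ) + meetCount B (γ ∘ e) = meetCount B γ + meetCount B C := by
  simp only [meetCount, apply_extend (fun X => {c | (X ∩ B c).Nonempty}.ncard)]
  exact sum_extend_add_sum_comp he _ _

end MeetCount

lemma isTransversalPartition_of_bijOn {n : ℕ} {α : Type} {B : Fin n → Set α} {E : Set α}
    (hB : Pairwise (Disjoint on B)) (hBE : ⋃ c, B c = E) {F : Fin n → Fin n → α}
    (hF : ∀ c, BijOn (F c) univ (B c)) :
    IsTransversalPartition B (fun a => range (F · a)) E := by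
  have hFB : ∀ {c c' a}, F c a ∈ B c' → c = c' := fun {c _ a} h =>
    subsingleton_setOfPred_mem_iff_pairwise_disjoint.2 hB _ ((hF c).mapsTo (mem_univ a)) h
  refine ⟨fun a c => ?_, fun a b hab => ?_, ?_⟩
  · rw [ncard_eq_one]
    refine ⟨F c a, Subset.antisymm ?_ ?_⟩
    · rintro _ ⟨⟨c', rfl⟩, h⟩
      rw [hFB h]; rfl
    · rintro _ rfl
      exact ⟨⟨c, rfl⟩, (hF c).mapsTo (mem_univ a)⟩
  · refine disjoint_left.2 ?_
    rintro _ ⟨c, rfl⟩ ⟨c', h⟩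
    have h' : F c a = F c' b := h.symm
    obtain rfl := hFB (h' ▸ (hF c').mapsTo (mem_univ b))
    exact hab ((hF c).injOn (mem_univ a) (mem_univ b) h.symm)
  · rw [← hBE]
    ext x
    simp only [mem_iUnion, mem_range, ← (hF _).image_eq, image_univ]
    exact exists_comm

lemma exists_isTransversalPartition_meetCount_le {α : Type} {n : ℕ}
    {B : Fin n → Set α} {E : Set α} (hB : Pairwise (Disjoint on B)) (hBE : ⋃ c, B c = E)
    (hBcard : ∀ c, (B c).ncard = n)
    {γ : Fin n → Set α} (hγ : Pairwise (Disjoint on γ)) :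
    ∃ τ, IsTransversalPartition B τ E ∧ meetCount B γ ≤ ∑ a, (γ a ∩ τ a).ncard := by
  choose F hF hFγ using fun c =>
    exists_bijOn_mem_of_pairwise_disjoint (finite_of_ncard_pos (hBcard c ▸ c.pos))
      (by simp [hBcard c]) hγ
  refine ⟨_, isTransversalPartition_of_bijOn hB hBE hF, Finset.sum_le_sum fun a _ => ?_⟩
  refine ncard_le_ncard_of_injOn (F · a) (fun c hc => ⟨hFγ c a hc, c, rfl⟩) ?_ (toFinite _)
  intro c _ c' _ (h : F c a = F c' a)
  exact subsingleton_setOfPred_mem_iff_pairwise_disjoint.2 hB _ ((hF c).mapsTo (mem_univ a))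
    (h ▸ (hF c').mapsTo (mem_univ a))

section Extend

variable {α ι ι' : Type*}

lemma pairwise_disjoint_extend {β : ι → Set α} (hβ : Pairwise (Disjoint on β)) {e : ι' → ι}
    (he : Injective e) {C : ι' → Set α} (hC : Pairwise (Disjoint on C))
    (hCβ : ∀ k, C k ⊆ ⋃ k, β (e k)) : Pairwise (Disjoint on extend e C β) := by
  have hout : ∀ {i}, (¬∃ k, e k = i) → ∀ k, Disjoint (C k) (β i) := fun {i} hi k =>
    disjoint_iUnion_left.2 (fun k' => hβ fun h => hi ⟨k', h⟩) |>.mono_left (hCβ k)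
  intro i₁ i₂ hne
  rcases em (∃ k, e k = i₁) with ⟨k₁, rfl⟩ | hi₁ <;>
    rcases em (∃ k, e k = i₂) with ⟨k₂, rfl⟩ | hi₂
  · simpa only [onFun, he.extend_apply] using hC (ne_of_apply_ne e hne)
  · simpa only [onFun, he.extend_apply, extend_apply' _ _ _ hi₂] using hout hi₂ k₁
  · simpa only [onFun, he.extend_apply, extend_apply' _ _ _ hi₁] using (hout hi₁ k₂).symm
  · simpa only [onFun, extend_apply' _ _ _ hi₁, extend_apply' _ _ _ hi₂] using hβ hne

lemma iUnion_extend {β : ι → Set α} {e : ι' → ι} (he : Injective e) {C : ι' → Set α}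
    (hCβ : ⋃ k, C k = ⋃ k, β (e k)) : ⋃ i, extend e C β i = ⋃ i, β i := by
  ext x
  simp only [mem_iUnion]
  constructor
  · rintro ⟨i, hx⟩
    rcases em (∃ k, e k = i) with ⟨k, rfl⟩ | hi
    · rw [he.extend_apply] at hx
      obtain ⟨k', hk'⟩ := mem_iUnion.1 (hCβ ▸ mem_iUnion.2 ⟨k, hx⟩ : x ∈ ⋃ k, β (e k))
      exact ⟨e k', hk'⟩
    · exact ⟨i, by rwa [extend_apply' _ _ _ hi] at hx⟩
  · rintro ⟨i, hx⟩
    rcases em (∃ k, e k = i) with ⟨k, rfl⟩ | hi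
    · obtain ⟨k', hk'⟩ := mem_iUnion.1 (hCβ ▸ mem_iUnion.2 ⟨k, hx⟩ : x ∈ ⋃ k, C k)
      exact ⟨e k', by rwa [he.extend_apply]⟩
    · exact ⟨i, by rwa [extend_apply' _ _ _ hi]⟩

end Extend

lemma IsBasePartition.extend {α : Type} {n k : ℕ} {M : Matroid α} {β : Fin n → Set α}
    (hβ : IsBasePartition M β) {e : Fin k → Fin n} (he : Injective e) {C : Fin k → Set α}
    (hC : ∀ j, M.IsBase (C j)) (hCdisj : Pairwise (Disjoint on C))
    (hCβ : ⋃ j, C j = ⋃ j, β (e j)) : IsBasePartition M (extend e C β) := by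
  refine ⟨fun a => ?_, pairwise_disjoint_extend hβ.2.1 he hCdisj (hCβ ▸ subset_iUnion C),
    (iUnion_extend he hCβ).trans hβ.2.2⟩
  rw [extend_def]
  split_ifs
  exacts [hC _, hβ.1 a]

lemma exists_injective_fin_three {n : ℕ} (hn : 3 ≤ n) {a b : Fin n} (hab : a ≠ b) :
    ∃ e : Fin 3 → Fin n, Injective e ∧ e 0 = a ∧ e 1 = b := by
  classical
  obtain ⟨c, -, hc⟩ := Finset.exists_mem_notMem_of_card_lt_card (s := {a, b})
    (t := Finset.univ) ((Finset.card_le_two).trans_lt (by simp; omega))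
  simp only [Finset.mem_insert, Finset.mem_singleton, not_or] at hc
  refine ⟨![a, b, c], ?_, rfl, rfl⟩
  intro i j hij
  fin_cases i <;> fin_cases j <;> simp_all [eq_comm]

lemma CStatement.exists_regroup {α : Type} {n : ℕ} (hC3 : CStatement 3) {M : Matroid α}
    {B : Fin n → Set α} (hB : ∀ c, M.Indep (B c)) (hBdisj : Pairwise (Disjoint on B))
    {X : Fin 3 → Set α} (hX : ∀ j, M.IsBase (X j)) (hXcard : ∀ j, (X j).ncard = n)
    (hXdisj : Pairwise (Disjoint on X)) :
    ∃ C : Fin 3 → Set α, (∀ j, M.IsBase (C j)) ∧ Pairwise (Disjoint on C) ∧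
      ⋃ j, C j = ⋃ j, X j ∧
      ∀ c, min ((⋃ j, X j) ∩ B c).ncard 3 ≤ {j | (C j ∩ B c).Nonempty}.ncard := by
  set U := ⋃ j, X j
  -- `U` contains a base of `M`, so the bases of `M ↾ U` are exactly the bases of `M` inside `U`.
  have hU : M.Spanning U :=
    (hX 0).spanning_of_superset (subset_iUnion X 0) (iUnion_subset fun j => (hX j).subset_ground)
  choose J hJU hJcard using fun c => exists_subset_card_eq (min_le_left ((U ∩ B c).ncard) 3)
  obtain ⟨g, hginj, hgcover, hgrow, hgcol⟩ := hC3 α n (M ↾ U) X J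
    (fun j => hU.isBase_restrict_iff.2 ⟨hX j, subset_iUnion X j⟩) hXcard hXdisj rfl
    (fun c => restrict_indep_iff.2 ⟨(hB c).subset ((hJU c).trans inter_subset_right),
      (hJU c).trans inter_subset_left⟩)
    (fun c c' hcc' => (hBdisj hcc').mono ((hJU c).trans inter_subset_right)
      ((hJU c').trans inter_subset_right))
    (fun c => hJcard c ▸ min_le_right _ _)
  have hcol : ∀ j, M.IsBase (range (g · j)) ∧ range (g · j) ⊆ U :=
    fun j => hU.isBase_restrict_iff.1 (hgcol j)
  refine ⟨fun j => range (g · j), fun j => (hcol j).1, fun j j' hjj' => ?_, ?_, fun c => ?_⟩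
  · refine disjoint_left.2 ?_
    rintro _ ⟨i, rfl⟩ ⟨i', h⟩
    have hij : ((i', j') : Fin n × Fin 3) = (i, j) := hginj h
    exact hjj' (congrArg Prod.snd hij).symm
  · refine Subset.antisymm (iUnion_subset fun j => (hcol j).2) fun x hx => ?_
    obtain ⟨i, j, rfl⟩ := hgcover x hx
    exact mem_iUnion.2 ⟨j, i, rfl⟩
  · -- `J c` lies in row `c`, whose entries lie in distinct columns.
    rw [← hJcard c]
    refine (ncard_le_ncard (t := (g c ·) '' {j | (range (g · j) ∩ B c).Nonempty}) ?_
      (toFinite _)).trans (ncard_image_le (toFinite _))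
    intro x hx
    obtain ⟨j, rfl⟩ := hgrow c hx
    exact ⟨j, ⟨g c j, ⟨c, rfl⟩, ((hJU c) hx).2⟩, rfl⟩

lemma meetCount_lt_of_min_le {α : Type} {n k : ℕ} {B : Fin n → Set α}
    (hBfin : ∀ c, (B c).Finite) {X C : Fin k → Set α} (hXdisj : Pairwise (Disjoint on X))
    (hC : ∀ c, min ((⋃ j, X j) ∩ B c).ncard k ≤ {j | (C j ∩ B c).Nonempty}.ncard)
    {c₀ : Fin n} {j₀ j₁ : Fin k} (h₀ : X j₀ ∩ B c₀ = ∅) (h₁ : 2 ≤ (X j₁ ∩ B c₀).ncard) :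
    meetCount B X < meetCount B C := by
  rw [meetCount_eq_sum_ncard, meetCount_eq_sum_ncard]
  refine Finset.sum_lt_sum (fun c _ => le_trans (le_min ?_ ?_) (hC c))
    ⟨c₀, Finset.mem_univ _, lt_of_lt_of_le (lt_min ?_ ?_) (hC c₀)⟩
  · exact ncard_setOf_inter_nonempty_le hXdisj (hBfin c)
  · simpa using ncard_le_card {j | (X j ∩ B c).Nonempty}
  · exact ncard_setOf_inter_nonempty_lt hXdisj (hBfin c₀) h₁
  · simpa using ncard_lt_card (s := {j | (X j ∩ B c₀).Nonempty})
      (ne_univ_iff_exists_notMem _ |>.2 ⟨j₀, by simp [h₀]⟩)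

lemma exists_meetCount_lt_of_CStatement {α : Type} {n : ℕ} (hn : 3 ≤ n) (hC3 : CStatement 3)
    {M : Matroid α} {B : Fin n → Set α} (hB : IsBasePartition M B)
    (hBcard : ∀ c, (B c).ncard = n) {β : Fin n → Set α} (hβ : IsBasePartition M β)
    {a₀ c₀ : Fin n} (h₀ : β a₀ ∩ B c₀ = ∅) :
    ∃ β' : Fin n → Set α, IsBasePartition M β' ∧ meetCount B β < meetCount B β' := by
  have hBfin : ∀ c, (B c).Finite := fun c => finite_of_ncard_pos (by rw [hBcard c]; omega)
  have hβcard : ∀ a, (β a).ncard = n := fun a =>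
    ((hβ.1 a).ncard_eq_ncard_of_isBase (hB.1 c₀)).trans (hBcard c₀)
  obtain ⟨b₀, hb₀⟩ := exists_one_lt_ncard_inter hβ.2.1 (hBfin c₀)
    (hβ.2.2 ▸ (hB.1 c₀).subset_ground) (by simp [hBcard]) h₀
  have hab : a₀ ≠ b₀ := by rintro rfl; simp [h₀] at hb₀
  obtain ⟨e, he, he₀, he₁⟩ := exists_injective_fin_three hn hab
  have hβe : Pairwise (Disjoint on β ∘ e) := hβ.2.1.comp_of_injective he
  obtain ⟨C, hC, hCdisj, hCU, hCmeet⟩ := hC3.exists_regroup (fun c => (hB.1 c).indep) hB.2.1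
    (fun j => hβ.1 (e j)) (fun j => hβcard _) hβe
  have hlt : meetCount B (β ∘ e) < meetCount B C :=
    meetCount_lt_of_min_le hBfin hβe hCmeet (j₀ := 0) (j₁ := 1) (by simpa [he₀]) (by simpa [he₁])
  have hsum := meetCount_extend_add B he C β
  exact ⟨extend e C β, hβ.extend he hC hCdisj hCU, by omega⟩

/-- The descent step: assuming `C(3)`, any double partition with `μ > 0` can be
improved to one with strictly smaller `μ`. -/
theorem descent_step (α : Type) (n : ℕ) (hn : 3 ≤ n) (M : Matroid α)
    (B : Fin n → Set α) (hB : IsBasePartition M B) (hBcard : ∀ i, (B i).ncard = n)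
    (hC3 : CStatement 3)
    (β τ : Fin n → Set α) (hβ : IsBasePartition M β)
    (hτ : IsTransversalPartition B τ M.E) (hμ : 0 < mu β τ) :
    ∃ β' τ' : Fin n → Set α, IsBasePartition M β' ∧
      IsTransversalPartition B τ' M.E ∧ mu β' τ' < mu β τ := by
  have hBfin : ∀ c, (B c).Finite := fun c => finite_of_ncard_pos (by rw [hBcard c]; omega)
  have hE : M.E.Finite := hB.2.2 ▸ finite_iUnion hBfin
  have hEcard : M.E.ncard = n * n := by
    rw [← hB.2.2, ncard_iUnion_of_fintype hBfin hB.2.1]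
    simp [hBcard]
  have hβτ := mu_add_sum_ncard_inter_self_eq_ncard hE hβ.2.1 hβ.2.2 hτ.2.1 hτ.2.2
  have hdiag : ∑ a, (β a ∩ τ a).ncard ≤ meetCount B β :=
    sum_ncard_inter_le_meetCount hτ.1 fun a => hB.2.2 ▸ (hβ.1 a).subset_ground
  obtain ⟨β', hβ', hlt⟩ : ∃ β' : Fin n → Set α,
      IsBasePartition M β' ∧ ∑ a, (β a ∩ τ a).ncard < meetCount B β' := by
    by_cases hfull : n * n ≤ meetCount B β
    · exact ⟨β, hβ, by omega⟩
    · obtain ⟨a₀, c₀, h₀⟩ := exists_inter_eq_empty_of_meetCount_lt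
        (B := B) (γ := β) (by simpa using hfull)
      obtain ⟨β', hβ', hgt⟩ := exists_meetCount_lt_of_CStatement hn hC3 hB hBcard hβ h₀
      exact ⟨β', hβ', by omega⟩
  obtain ⟨τ', hτ', hle⟩ :=
    exists_isTransversalPartition_meetCount_le hB.2.1 hB.2.2 hBcard hβ'.2.1
  have hβ'τ' := mu_add_sum_ncard_inter_self_eq_ncard hE hβ'.2.1 hβ'.2.2 hτ'.2.1 hτ'.2.2
  exact ⟨β', τ', hβ', hτ', by omega⟩
end
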